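/- arXiv:2408.14666 — 4 statements merged into one kernel-verified Lean document; each statement's English description precedes it below -/
import Mathlib

section
/- For vectors v, w in F^n, the inequality |v·u| ≤ |w·u| holds for all u ∈ F^n if and only if v = λw for some scalar λ with |λ| ≤ 1. -/
/-!
Testing the inequality against the `u` orthogonal to `w` shows `v ∈ (𝕜 ∙ w)ᗮᗮ`, which is `𝕜 ∙ w`
since a line is complete; testing it against `u = w` then bounds the scalar by `1`.
-/

open scoped InnerProductSpace

section NormInnerLe

variable {𝕜 E : Type*} [RCLike 𝕜] [NormedAddCommGroup E] [InnerProductSpace 𝕜 E]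

theorem exists_smul_eq_of_inner_eq_zero_imp {v w : E}
    (h : ∀ u, ⟪w, u⟫_𝕜 = 0 → ⟪v, u⟫_𝕜 = 0) : ∃ c : 𝕜, c • w = v := by
  have hv : v ∈ (𝕜 ∙ w)ᗮᗮ := by
    refine (Submodule.mem_orthogonal _ v).mpr fun u hu => ?_
    have hwu : ⟪w, u⟫_𝕜 = 0 :=
      (Submodule.mem_orthogonal _ u).mp hu w (Submodule.mem_span_singleton_self w)
    rw [← inner_conj_symm, h u hwu, map_zero]
  rwa [Submodule.orthogonal_orthogonal, Submodule.mem_span_singleton] at hv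

theorem norm_le_one_of_norm_inner_smul_self_le {c : 𝕜} {w : E} (hw : w ≠ 0)
    (h : ‖⟪c • w, w⟫_𝕜‖ ≤ ‖⟪w, w⟫_𝕜‖) : ‖c‖ ≤ 1 := by
  rw [inner_smul_left, norm_mul, RCLike.norm_conj] at h
  exact (mul_le_iff_le_one_left (norm_pos_iff.mpr (inner_self_ne_zero.mpr hw))).mp h

theorem norm_inner_smul_left_le {c : 𝕜} (hc : ‖c‖ ≤ 1) (w u : E) :
    ‖⟪c • w, u⟫_𝕜‖ ≤ ‖⟪w, u⟫_𝕜‖ := by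
  rw [inner_smul_left, norm_mul, RCLike.norm_conj]
  exact mul_le_of_le_one_left (norm_nonneg _) hc

theorem forall_norm_inner_le_iff_exists_smul (v w : E) :
    (∀ u, ‖⟪v, u⟫_𝕜‖ ≤ ‖⟪w, u⟫_𝕜‖) ↔ ∃ c : 𝕜, ‖c‖ ≤ 1 ∧ v = c • w := by
  refine ⟨fun h => ?_, fun ⟨c, hc, hv⟩ u => hv ▸ norm_inner_smul_left_le hc w u⟩
  obtain ⟨c, rfl⟩ := exists_smul_eq_of_inner_eq_zero_imp fun u hwu =>
    norm_le_zero_iff.mp ((h u).trans_eq (by rw [hwu, norm_zero]))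
  rcases eq_or_ne w 0 with rfl | hw
  · exact ⟨0, by simp, by simp⟩
  · exact ⟨c, norm_le_one_of_norm_inner_smul_self_le hw (h w), rfl⟩

end NormInnerLe

/-- For vectors `v, w ∈ 𝔽ⁿ`, the inequality `|v·u| ≤ |w·u|` holds for all
`u ∈ 𝔽ⁿ` if and only if `v = λ • w` for some scalar `λ` with `|λ| ≤ 1`. -/
theorem stmt1 {𝕜 : Type*} [RCLike 𝕜] {n : ℕ} (v w : EuclideanSpace 𝕜 (Fin n)) :
    (∀ u : EuclideanSpace 𝕜 (Fin n), ‖(inner 𝕜 v u : 𝕜)‖ ≤ ‖(inner 𝕜 w u : 𝕜)‖) ↔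
      ∃ c : 𝕜, ‖c‖ ≤ 1 ∧ v = c • w :=
  forall_norm_inner_le_iff_exists_smul v w
end

section
/- Let F be a measurable mapping from a σ-finite measure space Ω into nonempty closed convex symmetric subsets of F^n. Then the following are equivalent: (i) the set of measurable selections of F is bounded in L^1(Ω;F^n); (ii) F is integrably bounded, i.e., there is 0 ≤ k ∈ L^1(Ω) with F(x) ⊆ {k(x)u : |u| ≤ 1} a.e.; (iii) the function h(x) := sup_{u ∈ F(x)} |u| lies in L^1(Ω). Moreover the supremum of L^1 norms of selections equals ‖h‖_{L^1}. -/
/-!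
Every measurable selection is bounded a.e. by `h`, so the supremum of their `L¹`-norms is at
most `∫ h`. Conversely, for `q` in a dense sequence the nearest-point maps `x ↦ P_{F x} q` are
measurable selections whose values are dense in each `F x`. Pasting the first `N` of them so as
to keep the one of largest norm gives selections whose norms increase to `h`, and monotone
convergence yields `∫ h ≤ sup`. The integrable bound in (ii) is `h` itself.
-/

open MeasureTheory ENNReal

/-- A subset of an `𝕜`-vector space is *symmetric* if it is closed under multiplication by
unimodular scalars. -/
def SymmSet (𝕜 : Type*) [RCLike 𝕜] {E : Type*} [SMul 𝕜 E] (K : Set E) : Prop :=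
  ∀ c : 𝕜, ‖c‖ = 1 → ∀ x ∈ K, c • x ∈ K

/-- The set `S⁰(Ω;F)` of measurable selections of a set-valued map `F`. -/
def SelSet {𝕜 : Type*} [RCLike 𝕜] {n : ℕ}
    [MeasurableSpace (EuclideanSpace 𝕜 (Fin n))]
    {Ω : Type*} [MeasurableSpace Ω] (μ : Measure Ω)
    (F : Ω → Set (EuclideanSpace 𝕜 (Fin n))) : Set (Ω → EuclideanSpace 𝕜 (Fin n)) :=
  {f | Measurable f ∧ ∀ᵐ x ∂μ, f x ∈ F x}


open Filter Topology Metric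

section ConvexProjection

variable {E : Type*} [NormedAddCommGroup E] [NormedSpace ℝ E]

lemma dist_sq_le_of_mem_convex (𝕜 : Type*) [RCLike 𝕜] [InnerProductSpace 𝕜 E] {K : Set E}
    (hK : Convex ℝ K) (q : E) {u v : E} (hu : u ∈ K) (hv : v ∈ K) :
    dist u v ^ 2 ≤ 2 * dist q u ^ 2 + 2 * dist q v ^ 2 - 4 * infDist q K ^ 2 := by
  set m := midpoint ℝ u v
  have hm : infDist q K ≤ ‖q - m‖ := by
    rw [← dist_eq_norm]
    exact infDist_le_dist_of_mem (hK.segment_subset hu hv (midpoint_mem_segment u v))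
  have hpar := parallelogram_law_with_norm 𝕜 (q - u) (q - v)
  have hsum : (q - u) + (q - v) = (2 : 𝕜) • (q - m) := by
    rw [two_smul, sub_add_sub_comm, sub_add_sub_comm, midpoint_add_self]
  rw [hsum, norm_smul, RCLike.norm_two, sub_sub_sub_cancel_left u v q] at hpar
  rw [dist_eq_norm q u, dist_eq_norm q v, dist_comm, dist_eq_norm]
  nlinarith [infDist_nonneg (x := q) (s := K)]

lemma Convex.tendsto_of_tendsto_dist_infDist (𝕜 : Type*) [RCLike 𝕜] [InnerProductSpace 𝕜 E]
    {K : Set E} (hK : Convex ℝ K) {q p : E} (hp : p ∈ K) (hpq : infDist q K = dist q p)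
    {ι : Type*} {l : Filter ι} {u : ι → E} (hu : ∀ i, u i ∈ K)
    (hlim : Tendsto (fun i => dist q (u i)) l (𝓝 (infDist q K))) :
    Tendsto u l (𝓝 p) := by
  rw [tendsto_iff_dist_tendsto_zero]
  have hbound : ∀ i, dist (u i) p ≤ √(2 * (dist q (u i) ^ 2 - infDist q K ^ 2)) := fun i => by
    rw [← Real.sqrt_sq dist_nonneg]
    refine Real.sqrt_le_sqrt ?_
    have h := dist_sq_le_of_mem_convex 𝕜 hK q (hu i) hp
    rw [← hpq] at h
    linarith
  have hzero := (((hlim.pow 2).sub_const (infDist q K ^ 2)).const_mul 2).sqrt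
  rw [sub_self, mul_zero, Real.sqrt_zero] at hzero
  exact squeeze_zero (fun _ => dist_nonneg) hbound hzero

end ConvexProjection

def MeasurableMultifunction {Ω E : Type*} [MeasurableSpace Ω] [MeasurableSpace E]
    (F : Ω → Set E) : Prop :=
  ∀ s : Set E, MeasurableSet s → MeasurableSet {x | (F x ∩ s).Nonempty}

namespace MeasurableMultifunction

variable {Ω E : Type*} [MeasurableSpace Ω] {F : Ω → Set E}

lemma measurable_infDist [PseudoMetricSpace E] [MeasurableSpace E] [OpensMeasurableSpace E]
    (hF : MeasurableMultifunction F) (hne : ∀ x, (F x).Nonempty) (q : E) :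
    Measurable fun x => infDist q (F x) := by
  refine measurable_of_Iio fun r => ?_
  convert hF (ball q r) measurableSet_ball using 1
  ext x
  simp [infDist_lt_iff (hne x), Set.Nonempty, dist_comm]

lemma measurable_iSup_nnnorm [SeminormedAddCommGroup E] [MeasurableSpace E]
    [OpensMeasurableSpace E] (hF : MeasurableMultifunction F) :
    Measurable fun x => ⨆ v ∈ F x, (‖v‖₊ : ℝ≥0∞) := by
  refine measurable_of_Ioi fun r => ?_
  convert hF {v : E | r < ‖v‖₊}
    (measurableSet_lt measurable_const continuous_nnnorm.measurable.coe_nnreal_ennreal) using 1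
  ext x
  simp [lt_iSup_iff, Set.Nonempty]

variable [NormedAddCommGroup E] [NormedSpace ℝ E] [MeasurableSpace E] [BorelSpace E]

/-- Nearest points in convex sets are unique, so `P` is the pointwise limit of measurable
approximate minimizers taken from a dense sequence. -/
lemma measurable_of_infDist_eq_dist (𝕜 : Type*) [RCLike 𝕜] [InnerProductSpace 𝕜 E]
    [TopologicalSpace.SeparableSpace E] (hF : MeasurableMultifunction F)
    (hne : ∀ x, (F x).Nonempty) (hconv : ∀ x, Convex ℝ (F x)) (q : E) {P : Ω → E}
    (hP : ∀ x, P x ∈ F x) (hPq : ∀ x, infDist q (F x) = dist q (P x)) : Measurable P := by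
  classical
  set e := TopologicalSpace.denseSeq E
  set δ : ℕ → ℝ := fun m => 1 / ((m : ℝ) + 1)
  have hδ : Tendsto δ atTop (𝓝 0) := tendsto_one_div_add_atTop_nhds_zero_nat
  have hex : ∀ m x, ∃ j, infDist (e j) (F x) < δ m ∧ dist q (e j) < infDist q (F x) + δ m := by
    intro m x
    have hδm : 0 < δ m / 2 := by positivity
    obtain ⟨v, hvF, hqv⟩ := (infDist_lt_iff (x := q) (hne x)).1 (lt_add_of_pos_right _ hδm)
    obtain ⟨j, hj⟩ := (TopologicalSpace.denseRange_denseSeq E).exists_dist_lt v hδm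
    refine ⟨j, (infDist_le_dist_of_mem hvF).trans_lt ?_, ?_⟩
    · rw [dist_comm]; linarith
    · linarith [dist_triangle q v (e j)]
  set g : ℕ → Ω → E := fun m x => e (Nat.find (hex m x))
  have hg : ∀ m, Measurable (g m) := fun m =>
    Measurable.find (p := fun j x => infDist (e j) (F x) < δ m ∧
        dist q (e j) < infDist q (F x) + δ m) (fun j => measurable_const) (fun j =>
      (measurableSet_lt (hF.measurable_infDist hne (e j)) measurable_const).inter
        (measurableSet_lt measurable_const ((hF.measurable_infDist hne q).add_const _))) (hex m)
  refine measurable_of_tendsto_metrizable hg (tendsto_pi_nhds.2 fun x => ?_)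
  have hnear : ∀ m, ∃ u ∈ F x, dist (g m x) u < δ m := fun m =>
    (infDist_lt_iff (hne x)).1 (Nat.find_spec (hex m x)).1
  choose u hu hgu using hnear
  have hqu : Tendsto (fun m => dist q (u m)) atTop (𝓝 (infDist q (F x))) := by
    refine tendsto_of_tendsto_of_tendsto_of_le_of_le tendsto_const_nhds
      (by simpa using (hδ.const_mul 2).const_add (infDist q (F x)))
      (fun m => infDist_le_dist_of_mem (hu m)) (fun m => ?_)
    linarith [dist_triangle q (g m x) (u m), (Nat.find_spec (hex m x)).2, hgu m]
  refine ((hconv x).tendsto_of_tendsto_dist_infDist 𝕜 (hP x) (hPq x) hu hqu).congr_dist ?_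
  exact squeeze_zero (fun _ => dist_nonneg) (fun m => (dist_comm _ _).trans_le (hgu m).le) hδ

/-- A Castaing representation, built from nearest points to a dense sequence. -/
lemma exists_dense_measurable_selections (𝕜 : Type*) [RCLike 𝕜] [InnerProductSpace 𝕜 E]
    [ProperSpace E] (hF : MeasurableMultifunction F) (hne : ∀ x, (F x).Nonempty)
    (hcl : ∀ x, IsClosed (F x)) (hconv : ∀ x, Convex ℝ (F x)) :
    ∃ f : ℕ → Ω → E, (∀ i, Measurable (f i)) ∧ (∀ i x, f i x ∈ F x) ∧
      ∀ x, F x ⊆ closure (Set.range fun i => f i x) := by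
  choose P hP hPq using fun q x => (hcl x).exists_infDist_eq_dist (hne x) q
  set e := TopologicalSpace.denseSeq E
  refine ⟨fun i => P (e i), fun i => hF.measurable_of_infDist_eq_dist 𝕜 hne hconv _ (hP _)
    (hPq _), fun i x => hP _ x, fun x v hv => Metric.mem_closure_iff.2 fun ε hε => ?_⟩
  obtain ⟨j, hj⟩ := (TopologicalSpace.denseRange_denseSeq E).exists_dist_lt v (half_pos hε)
  have hPj : dist (e j) (P (e j) x) ≤ dist (e j) v := hPq (e j) x ▸ infDist_le_dist_of_mem hv
  refine ⟨_, ⟨j, rfl⟩, ?_⟩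
  linarith [dist_triangle v (e j) (P (e j) x), dist_comm v (e j)]

end MeasurableMultifunction

lemma iSup_nnnorm_le_of_subset_closure {E ι : Type*} [SeminormedAddGroup E] {S : Set E}
    {g : ι → E} (hS : S ⊆ closure (Set.range g)) :
    ⨆ v ∈ S, (‖v‖₊ : ℝ≥0∞) ≤ ⨆ i, (‖g i‖₊ : ℝ≥0∞) := by
  set T := {w : E | (‖w‖₊ : ℝ≥0∞) ≤ ⨆ i, (‖g i‖₊ : ℝ≥0∞)}
  have hclosed : IsClosed T := isClosed_le (by fun_prop) continuous_const
  have hrange : Set.range g ⊆ T :=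
    Set.range_subset_iff.2 fun i => le_iSup (fun i => (‖g i‖₊ : ℝ≥0∞)) i
  exact iSup₂_le fun v hv => closure_minimal hrange hclosed (hS hv)

section MaxNormSeq

variable {Ω E : Type*} [SeminormedAddGroup E]

noncomputable def maxNormSeq (f : ℕ → Ω → E) : ℕ → Ω → E
  | 0 => f 0
  | N + 1 => fun x => if ‖maxNormSeq f N x‖ ≤ ‖f (N + 1) x‖ then f (N + 1) x else maxNormSeq f N x

variable (f : ℕ → Ω → E)

lemma exists_maxNormSeq_eq (N : ℕ) (x : Ω) : ∃ i, maxNormSeq f N x = f i x := by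
  induction N with
  | zero => exact ⟨0, rfl⟩
  | succ N ih =>
    simp only [maxNormSeq]
    split_ifs
    exacts [⟨N + 1, rfl⟩, ih]

lemma norm_maxNormSeq_succ (N : ℕ) (x : Ω) :
    ‖maxNormSeq f (N + 1) x‖ = max ‖maxNormSeq f N x‖ ‖f (N + 1) x‖ := by
  simp only [maxNormSeq]
  split_ifs with h
  exacts [(max_eq_right h).symm, (max_eq_left (le_of_not_ge h)).symm]

lemma norm_le_norm_maxNormSeq {i N : ℕ} (h : i ≤ N) (x : Ω) :
    ‖f i x‖ ≤ ‖maxNormSeq f N x‖ := by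
  induction N, h using Nat.le_induction with
  | base =>
    cases i with
    | zero => rfl
    | succ i => exact (norm_maxNormSeq_succ f i x).symm ▸ le_max_right _ _
  | succ N _ ih => exact (norm_maxNormSeq_succ f N x).symm ▸ ih.trans (le_max_left _ _)

lemma monotone_norm_maxNormSeq (x : Ω) : Monotone fun N => ‖maxNormSeq f N x‖ :=
  monotone_nat_of_le_succ fun N => (norm_maxNormSeq_succ f N x).symm ▸ le_max_left _ _

lemma iSup_nnnorm_maxNormSeq (x : Ω) :
    ⨆ N, (‖maxNormSeq f N x‖₊ : ℝ≥0∞) = ⨆ i, (‖f i x‖₊ : ℝ≥0∞) := by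
  refine le_antisymm (iSup_le fun N => ?_) (iSup_le fun i => le_iSup_of_le i ?_)
  · obtain ⟨i, hi⟩ := exists_maxNormSeq_eq f N x
    exact hi ▸ le_iSup (fun i => (‖f i x‖₊ : ℝ≥0∞)) i
  · exact ENNReal.coe_le_coe.2 (norm_le_norm_maxNormSeq f le_rfl x)

variable [MeasurableSpace Ω] [MeasurableSpace E] [OpensMeasurableSpace E] {f}

lemma measurable_maxNormSeq (hf : ∀ i, Measurable (f i)) (N : ℕ) :
    Measurable (maxNormSeq f N) := by
  induction N with
  | zero => exact hf 0
  | succ N ih => exact Measurable.ite (measurableSet_le (continuous_norm.measurable.comp ih)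
    (continuous_norm.measurable.comp (hf _))) (hf _) ih

lemma lintegral_iSup_nnnorm_eq_iSup_lintegral_maxNormSeq (μ : Measure Ω)
    (hf : ∀ i, Measurable (f i)) :
    ∫⁻ x, ⨆ i, (‖f i x‖₊ : ℝ≥0∞) ∂μ = ⨆ N, ∫⁻ x, ‖maxNormSeq f N x‖₊ ∂μ := by
  simp_rw [← iSup_nnnorm_maxNormSeq f]
  exact lintegral_iSup
    (fun N => (continuous_nnnorm.measurable.comp (measurable_maxNormSeq hf N)).coe_nnreal_ennreal)
    fun _ _ hMN x => ENNReal.coe_le_coe.2 (monotone_norm_maxNormSeq f x hMN)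

end MaxNormSeq

lemma lintegral_iSup_nnnorm_ne_top_iff {Ω E : Type*} [MeasurableSpace Ω]
    [SeminormedAddGroup E] (μ : Measure Ω) {F : Ω → Set E}
    (hh : AEMeasurable (fun x => ⨆ v ∈ F x, (‖v‖₊ : ℝ≥0∞)) μ) :
    (∫⁻ x, (⨆ v ∈ F x, (‖v‖₊ : ℝ≥0∞)) ∂μ) ≠ ⊤ ↔
      ∃ k : Ω → ℝ, Integrable k μ ∧ (∀ᵐ x ∂μ, 0 ≤ k x) ∧ ∀ᵐ x ∂μ, ∀ v ∈ F x, ‖v‖ ≤ k x := by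
  constructor
  · intro hfin
    refine ⟨fun x => (⨆ v ∈ F x, (‖v‖₊ : ℝ≥0∞)).toReal,
      integrable_toReal_of_lintegral_ne_top hh hfin,
      ae_of_all _ fun _ => ENNReal.toReal_nonneg, ?_⟩
    filter_upwards [ae_lt_top' hh hfin] with x hx v hv
    simpa using ENNReal.toReal_mono hx.ne
      (le_iSup₂ (f := fun v (_ : v ∈ F x) => (‖v‖₊ : ℝ≥0∞)) v hv)
  · rintro ⟨k, hk, -, hFk⟩
    refine (lt_of_le_of_lt (lintegral_mono_ae ?_) hk.lintegral_lt_top).ne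
    filter_upwards [hFk] with x hx
    exact iSup₂_le fun v hv => (ofReal_norm v).symm.trans_le (ENNReal.ofReal_le_ofReal (hx v hv))

section Selections

variable {𝕜 : Type*} [RCLike 𝕜] {n : ℕ} [MeasurableSpace (EuclideanSpace 𝕜 (Fin n))]
  [BorelSpace (EuclideanSpace 𝕜 (Fin n))] {Ω : Type*} [MeasurableSpace Ω] (μ : Measure Ω)
  {F : Ω → Set (EuclideanSpace 𝕜 (Fin n))}

lemma lintegral_iSup_nnnorm_le_iSup_selSet {f : ℕ → Ω → EuclideanSpace 𝕜 (Fin n)}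
    (hf : ∀ i, f i ∈ SelSet μ F) :
    ∫⁻ x, ⨆ i, (‖f i x‖₊ : ℝ≥0∞) ∂μ ≤ ⨆ g ∈ SelSet μ F, ∫⁻ x, ‖g x‖₊ ∂μ := by
  rw [lintegral_iSup_nnnorm_eq_iSup_lintegral_maxNormSeq μ fun i => (hf i).1]
  refine iSup_le fun N => le_iSup₂_of_le (maxNormSeq f N)
    ⟨measurable_maxNormSeq (fun i => (hf i).1) N, ?_⟩ le_rfl
  filter_upwards [ae_all_iff.2 fun i => (hf i).2] with x hx
  obtain ⟨i, hi⟩ := exists_maxNormSeq_eq f N x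
  exact hi ▸ hx i

theorem iSup_lintegral_selSet_eq (hF : MeasurableMultifunction F) (hne : ∀ x, (F x).Nonempty)
    (hcl : ∀ x, IsClosed (F x)) (hconv : ∀ x, Convex ℝ (F x)) :
    ⨆ f ∈ SelSet μ F, ∫⁻ x, ‖f x‖₊ ∂μ = ∫⁻ x, ⨆ v ∈ F x, (‖v‖₊ : ℝ≥0∞) ∂μ := by
  refine le_antisymm (iSup₂_le fun f hf => lintegral_mono_ae
    (hf.2.mono fun x hx => le_iSup₂_of_le (f x) hx le_rfl)) ?_
  obtain ⟨f, hfm, hfF, hdense⟩ := hF.exists_dense_measurable_selections 𝕜 hne hcl hconv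
  calc ∫⁻ x, ⨆ v ∈ F x, (‖v‖₊ : ℝ≥0∞) ∂μ ≤ ∫⁻ x, ⨆ i, (‖f i x‖₊ : ℝ≥0∞) ∂μ :=
        lintegral_mono fun x => iSup_nnnorm_le_of_subset_closure (hdense x)
    _ ≤ ⨆ g ∈ SelSet μ F, ∫⁻ x, ‖g x‖₊ ∂μ :=
        lintegral_iSup_nnnorm_le_iSup_selSet μ fun i => ⟨hfm i, ae_of_all _ (hfF i)⟩

end Selections

theorem stmt4_general {𝕜 : Type*} [RCLike 𝕜] {n : ℕ}
    [MeasurableSpace (EuclideanSpace 𝕜 (Fin n))] [BorelSpace (EuclideanSpace 𝕜 (Fin n))]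
    {Ω : Type*} [MeasurableSpace Ω] (μ : Measure Ω)
    (F : Ω → Set (EuclideanSpace 𝕜 (Fin n)))
    (hFmeas : ∀ E : Set (EuclideanSpace 𝕜 (Fin n)), MeasurableSet E →
      MeasurableSet {x | (F x ∩ E).Nonempty})
    (hne : ∀ x, (F x).Nonempty) (hcl : ∀ x, IsClosed (F x))
    (hconv : ∀ x, Convex ℝ (F x)) :
    ((⨆ f ∈ SelSet μ F, ∫⁻ x, ‖f x‖₊ ∂μ) ≠ ⊤ ↔
      ∃ k : Ω → ℝ, Integrable k μ ∧ (∀ᵐ x ∂μ, 0 ≤ k x) ∧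
        ∀ᵐ x ∂μ, ∀ v ∈ F x, ‖v‖ ≤ k x) ∧
    ((⨆ f ∈ SelSet μ F, ∫⁻ x, ‖f x‖₊ ∂μ) ≠ ⊤ ↔
      (∫⁻ x, (⨆ v ∈ F x, (‖v‖₊ : ℝ≥0∞)) ∂μ) ≠ ⊤) ∧
    ((⨆ f ∈ SelSet μ F, ∫⁻ x, ‖f x‖₊ ∂μ) ≠ ⊤ →
      (⨆ f ∈ SelSet μ F, ∫⁻ x, ‖f x‖₊ ∂μ) = ∫⁻ x, (⨆ v ∈ F x, (‖v‖₊ : ℝ≥0∞)) ∂μ) := by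
  rw [iSup_lintegral_selSet_eq μ hFmeas hne hcl hconv]
  exact ⟨lintegral_iSup_nnnorm_ne_top_iff μ
    (MeasurableMultifunction.measurable_iSup_nnnorm hFmeas).aemeasurable, Iff.rfl, fun _ => rfl⟩

/-- For a measurable map `F` from a σ-finite measure space into nonempty
closed convex symmetric subsets of `𝔽ⁿ`, the following are equivalent:
(i) the measurable selections of `F` form a bounded subset of `L¹(Ω;𝔽ⁿ)`;
(ii) `F` is integrably bounded: there is `0 ≤ k ∈ L¹(Ω)` with `F x ⊆ {v : ‖v‖ ≤ k x}` a.e.;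
(iii) `h(x) := sup_{v ∈ F x} ‖v‖` lies in `L¹(Ω)`.
Moreover, in this case the supremum of the `L¹`-norms of the selections equals `‖h‖_{L¹}`. -/
theorem stmt4 {𝕜 : Type*} [RCLike 𝕜] {n : ℕ}
    [MeasurableSpace (EuclideanSpace 𝕜 (Fin n))] [BorelSpace (EuclideanSpace 𝕜 (Fin n))]
    {Ω : Type*} [MeasurableSpace Ω] (μ : Measure Ω) [SigmaFinite μ]
    (F : Ω → Set (EuclideanSpace 𝕜 (Fin n)))
    (hFmeas : ∀ E : Set (EuclideanSpace 𝕜 (Fin n)), MeasurableSet E →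
      MeasurableSet {x | (F x ∩ E).Nonempty})
    (hne : ∀ x, (F x).Nonempty) (hcl : ∀ x, IsClosed (F x))
    (hconv : ∀ x, Convex ℝ (F x)) (hsymm : ∀ x, SymmSet 𝕜 (F x)) :
    ((⨆ f ∈ SelSet μ F, ∫⁻ x, ‖f x‖₊ ∂μ) ≠ ⊤ ↔
      ∃ k : Ω → ℝ, Integrable k μ ∧ (∀ᵐ x ∂μ, 0 ≤ k x) ∧
        ∀ᵐ x ∂μ, ∀ v ∈ F x, ‖v‖ ≤ k x) ∧
    ((⨆ f ∈ SelSet μ F, ∫⁻ x, ‖f x‖₊ ∂μ) ≠ ⊤ ↔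
      (∫⁻ x, (⨆ v ∈ F x, (‖v‖₊ : ℝ≥0∞)) ∂μ) ≠ ⊤) ∧
    ((⨆ f ∈ SelSet μ F, ∫⁻ x, ‖f x‖₊ ∂μ) ≠ ⊤ →
      (⨆ f ∈ SelSet μ F, ∫⁻ x, ‖f x‖₊ ∂μ) = ∫⁻ x, (⨆ v ∈ F x, (‖v‖₊ : ℝ≥0∞)) ∂μ) :=
  stmt4_general μ F hFmeas hne hcl hconv
end

section
/- Let X be a Banach lattice of measurable functions (quasi-Banach function space) over Ω with the ideal property, and W: Ω → F^{n×n} a matrix weight (a.e. Hermitian positive definite). Then the Köthe dual of the matrix-weighted space X_W equals (X')_{W^{-1}}: a function g lies in the Köthe dual of X_W if and only if |W^{-1}g| ∈ X', and the dual norms agree. -/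
open MeasureTheory ENNReal
open scoped ComplexOrder

variable {𝕜 : Type*} [RCLike 𝕜] [MeasurableSpace 𝕜] [BorelSpace 𝕜] {n : ℕ}
  [MeasurableSpace (EuclideanSpace 𝕜 (Fin n))] [BorelSpace (EuclideanSpace 𝕜 (Fin n))]
  {Ω : Type*} [MeasurableSpace Ω]

/-- The Köthe dual (extended-valued) norm of a scalar quasi-Banach function space given by the
extended norm `eN` (with `eN f = ∞` meaning `f ∉ X`):
`‖g‖_{X'} = sup { ∫ |f g| dμ : f measurable, ‖f‖_X ≤ 1 }`. -/
noncomputable def scalarDualNorm (μ : Measure Ω) (eN : (Ω → ℝ) → ℝ≥0∞) (g : Ω → ℝ) : ℝ≥0∞ :=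
  ⨆ f ∈ {f : Ω → ℝ | Measurable f ∧ eN f ≤ 1}, ∫⁻ x, ‖f x * g x‖₊ ∂μ

/-- The extended norm of the matrix-weighted space `X_W`: `‖f‖_{X_W} = ‖ |W f| ‖_X`. -/
noncomputable def matrixWeightedNorm (eN : (Ω → ℝ) → ℝ≥0∞)
    (W : Ω → Matrix (Fin n) (Fin n) 𝕜) (f : Ω → EuclideanSpace 𝕜 (Fin n)) : ℝ≥0∞ :=
  eN fun x => ‖Matrix.toEuclideanLin (W x) (f x)‖

/-- The Köthe dual (extended-valued) norm of the `𝔽ⁿ`-directional space `X_W`: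
`‖g‖_{(X_W)'} = sup { ∫ |f·g| dμ : f measurable, ‖f‖_{X_W} ≤ 1 }`. -/
noncomputable def vectorDualNorm (μ : Measure Ω) (eN : (Ω → ℝ) → ℝ≥0∞)
    (W : Ω → Matrix (Fin n) (Fin n) 𝕜) (g : Ω → EuclideanSpace 𝕜 (Fin n)) : ℝ≥0∞ :=
  ⨆ f ∈ {f : Ω → EuclideanSpace 𝕜 (Fin n) | Measurable f ∧ matrixWeightedNorm eN W f ≤ 1},
    ∫⁻ x, (‖(inner 𝕜 (f x) (g x) : 𝕜)‖₊ : ℝ≥0∞) ∂μ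

/-!
Both sides are suprema of integrals, and the theorem is pointwise linear algebra. Writing
`⟪f, g⟫ = ⟪W f, W⁻¹ g⟫` (as `W` is Hermitian), Cauchy–Schwarz gives `|⟪f, g⟫| ≤ |W f| |W⁻¹ g|`,
so every test function `f` for `(X_W)'` yields the test function `|W f|` for `X'` with a larger
integrand. Conversely, for a test function `F` of `X'` the vector field
`f = (F / |W⁻¹ g|) W⁻¹ W⁻¹ g` satisfies `|W f| ≤ |F|`, hence `‖f‖_{X_W} ≤ ‖F‖_X` by the ideal
property, and `⟪f, g⟫ = F |W⁻¹ g|` exactly.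
-/

open scoped InnerProductSpace

section InnerProductSpace

variable {𝕜 E : Type*} [RCLike 𝕜] [NormedAddCommGroup E] [InnerProductSpace 𝕜 E]
  {T S : E →ₗ[𝕜] E}

theorem LinearMap.IsSymmetric.inner_eq_inner_apply_apply (hT : T.IsSymmetric)
    (hTS : Function.LeftInverse T S) (u v : E) : ⟪u, v⟫_𝕜 = ⟪T u, S v⟫_𝕜 := by
  rw [hT, hTS]

theorem LinearMap.IsSymmetric.norm_inner_le (hT : T.IsSymmetric)
    (hTS : Function.LeftInverse T S) (u v : E) : ‖⟪u, v⟫_𝕜‖ ≤ ‖T u‖ * ‖S v‖ :=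
  hT.inner_eq_inner_apply_apply hTS u v ▸ norm_inner_le_norm _ _

theorem LinearMap.IsSymmetric.inner_smul_apply_apply_self (hS : S.IsSymmetric) (t : ℝ)
    (v : E) : ⟪((t / ‖S v‖ : ℝ) : 𝕜) • S (S v), v⟫_𝕜 = ((t * ‖S v‖ : ℝ) : 𝕜) := by
  rw [inner_smul_left, hS, inner_self_eq_norm_sq_to_K, RCLike.conj_ofReal]
  rcases eq_or_ne ‖S v‖ 0 with h | h
  · simp [h]
  · push_cast
    field_simp

theorem LinearMap.norm_apply_smul_apply_apply_le (hTS : Function.LeftInverse T S) (t : ℝ)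
    (v : E) : ‖T (((t / ‖S v‖ : ℝ) : 𝕜) • S (S v))‖ ≤ |t| := by
  rw [map_smul, hTS, norm_smul, RCLike.norm_ofReal, abs_div, abs_norm]
  rcases eq_or_ne ‖S v‖ 0 with h | h
  · simp [h]
  · rw [div_mul_cancel₀ _ h]

theorem Matrix.leftInverse_toEuclideanLin_inv {ι : Type*} [Fintype ι] [DecidableEq ι]
    {A : Matrix ι ι 𝕜} (hA : IsUnit A.det) :
    Function.LeftInverse (toEuclideanLin A) (toEuclideanLin A⁻¹) := fun v => by
  simp [Matrix.toLpLin_apply, Matrix.mul_nonsing_inv A hA]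

end InnerProductSpace

theorem measurable_matrix_inv_apply {ι : Type*} [Fintype ι] [DecidableEq ι]
    {A : Ω → Matrix ι ι 𝕜} (hA : ∀ i j, Measurable fun x => A x i j) (i j : ι) :
    Measurable fun x => (A x)⁻¹ i j := by
  have hA' : Measurable fun x => (fun i j => A x i j : ι → ι → 𝕜) :=
    measurable_pi_lambda _ fun i => measurable_pi_lambda _ (hA i)
  have hdet : Continuous fun M : ι → ι → 𝕜 => (Matrix.of M).det := by fun_prop
  have hadj : Continuous fun M : ι → ι → 𝕜 => (Matrix.of M).adjugate i j := by fun_prop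
  simp only [Matrix.inv_def, Matrix.smul_apply, Ring.inverse_eq_inv', smul_eq_mul]
  exact (hdet.measurable.comp hA').inv.mul (hadj.measurable.comp hA')

theorem measurable_toEuclideanLin_apply {ι : Type*} [Fintype ι] [DecidableEq ι]
    [MeasurableSpace (EuclideanSpace 𝕜 ι)] [BorelSpace (EuclideanSpace 𝕜 ι)]
    {A : Ω → Matrix ι ι 𝕜} (hA : ∀ i j, Measurable fun x => A x i j)
    {f : Ω → EuclideanSpace 𝕜 ι} (hf : Measurable f) :
    Measurable fun x => Matrix.toEuclideanLin (A x) (f x) := by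
  have hA' : Measurable fun x => (fun i j => A x i j : ι → ι → 𝕜) :=
    measurable_pi_lambda _ fun i => measurable_pi_lambda _ (hA i)
  have hcont : Continuous fun p : (ι → ι → 𝕜) × EuclideanSpace 𝕜 ι =>
      Matrix.toEuclideanLin (Matrix.of p.1) p.2 := by
    simp only [Matrix.toLpLin_apply]
    fun_prop
  exact (hcont.measurable.comp (hA'.prodMk hf) :)

theorem vectorDualNorm_le_scalarDualNorm {μ : Measure Ω} (eN : (Ω → ℝ) → ℝ≥0∞)
    {W : Ω → Matrix (Fin n) (Fin n) 𝕜} (hWmeas : ∀ i j, Measurable fun x => W x i j)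
    (hW : ∀ᵐ x ∂μ, (W x).PosDef) (g : Ω → EuclideanSpace 𝕜 (Fin n)) :
    vectorDualNorm μ eN W g ≤
      scalarDualNorm μ eN fun x => ‖Matrix.toEuclideanLin (W x)⁻¹ (g x)‖ := by
  refine iSup₂_le fun f ⟨hf, hf1⟩ => ?_
  refine le_iSup₂_of_le (fun x => ‖Matrix.toEuclideanLin (W x) (f x)‖)
    ⟨(measurable_toEuclideanLin_apply hWmeas hf).norm, hf1⟩ (lintegral_mono_ae ?_)
  filter_upwards [hW] with x hx
  have hT := Matrix.isSymmetric_toEuclideanLin_iff.mpr hx.isHermitian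
  have hTS := Matrix.leftInverse_toEuclideanLin_inv ((W x).isUnit_iff_isUnit_det.mp hx.isUnit)
  rw [ENNReal.coe_le_coe, ← NNReal.coe_le_coe, coe_nnnorm, coe_nnnorm, Real.norm_eq_abs]
  exact (hT.norm_inner_le hTS (f x) (g x)).trans (le_abs_self _)

theorem scalarDualNorm_le_vectorDualNorm {μ : Measure Ω} {eN : (Ω → ℝ) → ℝ≥0∞}
    (hideal : ∀ f g : Ω → ℝ, (∀ᵐ x ∂μ, |g x| ≤ |f x|) → eN g ≤ eN f)
    {W : Ω → Matrix (Fin n) (Fin n) 𝕜} (hWmeas : ∀ i j, Measurable fun x => W x i j)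
    (hW : ∀ᵐ x ∂μ, (W x).PosDef) {g : Ω → EuclideanSpace 𝕜 (Fin n)} (hg : Measurable g) :
    scalarDualNorm μ eN (fun x => ‖Matrix.toEuclideanLin (W x)⁻¹ (g x)‖) ≤
      vectorDualNorm μ eN W g := by
  refine iSup₂_le fun F ⟨hF, hF1⟩ => ?_
  set Sg := fun x => Matrix.toEuclideanLin (W x)⁻¹ (g x)
  have hWinv := measurable_matrix_inv_apply hWmeas
  have hSg : Measurable Sg := measurable_toEuclideanLin_apply hWinv hg
  refine le_iSup₂_of_le
    (fun x => ((F x / ‖Sg x‖ : ℝ) : 𝕜) • Matrix.toEuclideanLin (W x)⁻¹ (Sg x))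
    ⟨?_, (hideal F _ ?_).trans hF1⟩ (lintegral_mono_ae ?_)
  · exact ((RCLike.continuous_ofReal (K := 𝕜)).measurable.comp (hF.div hSg.norm)).smul
      (measurable_toEuclideanLin_apply hWinv hSg)
  · filter_upwards [hW] with x hx
    have hTS := Matrix.leftInverse_toEuclideanLin_inv ((W x).isUnit_iff_isUnit_det.mp hx.isUnit)
    rw [abs_norm]
    exact LinearMap.norm_apply_smul_apply_apply_le hTS (F x) (g x)
  · filter_upwards [hW] with x hx
    have hS := Matrix.isSymmetric_toEuclideanLin_iff.mpr hx.isHermitian.inv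
    rw [hS.inner_smul_apply_apply_self, ENNReal.coe_le_coe, ← NNReal.coe_le_coe, coe_nnnorm,
      coe_nnnorm, RCLike.norm_ofReal, Real.norm_eq_abs]

theorem stmt5_general (μ : Measure Ω) (eN : (Ω → ℝ) → ℝ≥0∞)
    (hideal : ∀ f g : Ω → ℝ, (∀ᵐ x ∂μ, |g x| ≤ |f x|) → eN g ≤ eN f)
    (W : Ω → Matrix (Fin n) (Fin n) 𝕜) (hWmeas : ∀ i j, Measurable fun x => W x i j)
    (hW : ∀ᵐ x ∂μ, (W x).PosDef)
    (g : Ω → EuclideanSpace 𝕜 (Fin n)) (hg : Measurable g) :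
    vectorDualNorm μ eN W g =
      scalarDualNorm μ eN fun x => ‖Matrix.toEuclideanLin (W x)⁻¹ (g x)‖ :=
  le_antisymm (vectorDualNorm_le_scalarDualNorm eN hWmeas hW g)
    (scalarDualNorm_le_vectorDualNorm hideal hWmeas hW hg)

/-- Let `X` be a quasi-Banach function space over `Ω` (encoded by its extended
norm `eN`, satisfying the ideal property and homogeneity), and let `W : Ω → 𝔽ⁿˣⁿ` be a matrix
weight (a.e. Hermitian positive definite, measurable).  Then the Köthe dual of the
matrix-weighted space `X_W` equals `(X')_{W⁻¹}`: for every measurable `g`, the dual norm of `g`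
in `(X_W)'` equals the `X'`-norm of `x ↦ ‖W(x)⁻¹ g(x)‖`; in particular `g` lies in the Köthe
dual of `X_W` iff `|W⁻¹ g| ∈ X'`, and the dual norms agree. -/
theorem stmt5 (μ : Measure Ω) [SigmaFinite μ] (eN : (Ω → ℝ) → ℝ≥0∞)
    (hideal : ∀ f g : Ω → ℝ, (∀ᵐ x ∂μ, |g x| ≤ |f x|) → eN g ≤ eN f)
    (hhomog : ∀ (c : ℝ) (f : Ω → ℝ), eN (fun x => c * f x) = ‖c‖₊ * eN f)
    (W : Ω → Matrix (Fin n) (Fin n) 𝕜) (hWmeas : ∀ i j, Measurable fun x => W x i j)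
    (hW : ∀ᵐ x ∂μ, (W x).PosDef)
    (g : Ω → EuclideanSpace 𝕜 (Fin n)) (hg : Measurable g) :
    vectorDualNorm μ eN W g =
      scalarDualNorm μ eN fun x => ‖Matrix.toEuclideanLin (W x)⁻¹ (g x)‖ :=
  stmt5_general μ eN hideal W hWmeas hW g hg
end

section
/- Let (B_k) be a decreasing sequence of nonempty closed convex symmetric subsets of F^n with ⋂_k B_k = {0}. Then there exists K such that B_k is compact for all k ≥ K, and any sequence (x_k) with x_k ∈ B_k converges to 0. -/
open Filter Topology

set_option maxHeartbeats 1000000 in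
/-- Let `(B_k)` be a decreasing sequence of nonempty closed convex symmetric
subsets of `𝔽ⁿ` with `⋂_k B_k = {0}`.  Then there exists `K` such that `B_k` is compact for all
`k ≥ K`, and any sequence `(x_k)` with `x_k ∈ B_k` converges to `0`. -/
theorem stmt7 {𝕜 : Type*} [RCLike 𝕜] {n : ℕ} (B : ℕ → Set (EuclideanSpace 𝕜 (Fin n)))
    (hne : ∀ k, (B k).Nonempty) (hcl : ∀ k, IsClosed (B k))
    (hconv : ∀ k, Convex ℝ (B k)) (hsymm : ∀ k, SymmSet 𝕜 (B k))
    (hdec : ∀ k, B (k + 1) ⊆ B k)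
    (hinter : (⋂ k, B k) = {0}) :
    (∃ K : ℕ, ∀ k ≥ K, IsCompact (B k)) ∧
    (∀ x : ℕ → EuclideanSpace 𝕜 (Fin n), (∀ k, x k ∈ B k) →
      Tendsto x atTop (𝓝 0)) := by
  have hmono : Antitone B := antitone_nat_of_succ_le hdec
  have h0 : ∀ k, (0 : EuclideanSpace 𝕜 (Fin n)) ∈ B k := by
    intro k
    have h : (0 : EuclideanSpace 𝕜 (Fin n)) ∈ ⋂ k, B k := by rw [hinter]; rfl
    exact Set.mem_iInter.mp h k
  -- key: a limit of points z j ∈ B (ψ j) with ψ → ∞ lies in the intersection, hence is 0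
  have key : ∀ (z : ℕ → EuclideanSpace 𝕜 (Fin n)) (ψ : ℕ → ℕ), Tendsto ψ atTop atTop →
      (∀ j, z j ∈ B (ψ j)) → ∀ a, Tendsto z atTop (𝓝 a) → a = 0 := by
    intro z ψ hψ hz a ha
    have hmem : ∀ m, a ∈ B m := by
      intro m
      refine (hcl m).mem_of_tendsto ha ?_
      filter_upwards [hψ.eventually (eventually_ge_atTop m)] with j hj
      exact hmono hj (hz j)
    have h : a ∈ ⋂ k, B k := Set.mem_iInter.mpr hmem
    rwa [hinter, Set.mem_singleton_iff] at h
  have hbdd : ∃ K, Bornology.IsBounded (B K) := by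
    by_contra h
    push_neg at h
    have hy : ∀ k, ∃ y ∈ B k, 1 ≤ ‖y‖ := by
      intro k
      by_contra hk
      push_neg at hk
      exact h k (isBounded_iff_forall_norm_le.mpr ⟨1, fun y hy => (hk y hy).le⟩)
    choose y hyB hy1 using hy
    have hypos : ∀ k, (0 : ℝ) < ‖y k‖ := fun k => lt_of_lt_of_le one_pos (hy1 k)
    set z : ℕ → EuclideanSpace 𝕜 (Fin n) := fun k => (‖y k‖⁻¹ : ℝ) • y k with hzdef
    have hzB : ∀ k, z k ∈ B k := by
      intro k
      have ha : (0:ℝ) ≤ ‖y k‖⁻¹ := inv_nonneg.mpr (hypos k).le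
      have hb : (0:ℝ) ≤ 1 - ‖y k‖⁻¹ := by
        have : ‖y k‖⁻¹ ≤ 1 := inv_le_one_of_one_le₀ (hy1 k)
        linarith
      have := (hconv k) (hyB k) (h0 k) ha hb (by ring)
      simpa using this
    have hzn : ∀ k, ‖z k‖ = 1 := by
      intro k
      rw [hzdef]
      simp only [norm_smul, norm_inv, norm_norm]
      exact inv_mul_cancel₀ (hypos k).ne'
    have hzs : ∀ k, z k ∈ Metric.sphere (0 : EuclideanSpace 𝕜 (Fin n)) 1 := by
      intro k
      simpa [mem_sphere_zero_iff_norm] using hzn k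
    obtain ⟨v, hv, φ, hφ, hlim⟩ :=
      (isCompact_sphere (0 : EuclideanSpace 𝕜 (Fin n)) 1).tendsto_subseq hzs
    have hv0 : v = 0 := key (fun j => z (φ j)) φ hφ.tendsto_atTop (fun j => hzB (φ j)) v hlim
    have : ‖v‖ = 1 := mem_sphere_zero_iff_norm.mp hv
    rw [hv0, norm_zero] at this
    norm_num at this
  obtain ⟨K, hK⟩ := hbdd
  have hcomp : ∀ k ≥ K, IsCompact (B k) := fun k hk =>
    Metric.isCompact_of_isClosed_isBounded (hcl k) (hK.subset (hmono hk))
  refine ⟨⟨K, hcomp⟩, ?_⟩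
  intro x hx
  rw [← tendsto_add_atTop_iff_nat K]
  set z : ℕ → EuclideanSpace 𝕜 (Fin n) := fun k => x (k + K) with hzdef
  have hzB : ∀ k, z k ∈ B K := fun k => hmono (Nat.le_add_left K k) (hx (k + K))
  apply Filter.tendsto_of_subseq_tendsto
  intro ns hns
  obtain ⟨a, ha, φ, hφ, hlim⟩ :=
    (hcomp K le_rfl).tendsto_subseq (x := fun j => z (ns j)) (fun j => hzB (ns j))
  have hψ : Tendsto (fun j => ns (φ j) + K) atTop atTop :=
    tendsto_atTop_mono (fun j => Nat.le_add_right _ K) (hns.comp hφ.tendsto_atTop)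
  have ha0 : a = 0 := key (fun j => z (ns (φ j))) (fun j => ns (φ j) + K) hψ
    (fun j => hx (ns (φ j) + K)) a hlim
  exact ⟨φ, ha0 ▸ hlim⟩
end
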